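/- Let n ∈ (1,∞) and d ≥ 2 an integer, and let C_n := max_{(z,u)∈[0,4]×[0,1]} c_n(z,u), where c_n(z,u) := z(4−z)[(1 − zu + zu²)^{n/2} − (1−u)^n]² / ( 2u² [u^{2n−2} + (1−u)^{2n−2}] ) for u ∈ (0,1] and c_n(z,0) := n² z (4−z)(2−z)²/8. Then for all p, q ∈ R^d: |p ∧ q|² (|p+q|^n − |q|^n)² ≤ (C_n/2) |p|⁴ |q|² [ |p|^{2n−2} + |q|^{2n−2} ]. -/

import Mathlib

/-! Put `a = |p|`, `b = |q|`, `s = p·q`, and assume `p, q ≠ 0` (otherwise both sides vanish).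
With `u = a/(a+b)` and `z = 2 - 2s/(ab)`, Cauchy–Schwarz places `(z, u)` in `[0,4] × (0,1]`, and
`1 - zu + zu² = |p+q|²/(a+b)²`, `1 - u = b/(a+b)`. Substituting, both sides of the inequality are
homogeneous of degree `2n+4` in `(a, b)`, and after clearing the common factor `(a+b)^{2n}` the
inequality is exactly `c_n(z, u) ≤ C_n`. -/

noncomputable section

/-- The function `c_n` of the paper on `[0,4] × [0,1]` (first coordinate `z`,
second coordinate `u`), defined piecewise at `u = 0`. -/
def cFun (n : ℝ) (zu : ℝ × ℝ) : ℝ :=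
  if zu.2 = 0 then n ^ 2 * zu.1 * (4 - zu.1) * (2 - zu.1) ^ 2 / 8
  else zu.1 * (4 - zu.1) *
      ((1 - zu.1 * zu.2 + zu.1 * zu.2 ^ 2) ^ (n / 2) - (1 - zu.2) ^ n) ^ 2 /
    (2 * zu.2 ^ 2 * (zu.2 ^ (2 * n - 2) + (1 - zu.2) ^ (2 * n - 2)))

open Set

lemma cFun_of_ne_zero (n : ℝ) {z u : ℝ} (hu : u ≠ 0) :
    cFun n (z, u) = z * (4 - z) * ((1 - z * u + z * u ^ 2) ^ (n / 2) - (1 - u) ^ n) ^ 2 /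
      (2 * u ^ 2 * (u ^ (2 * n - 2) + (1 - u) ^ (2 * n - 2))) :=
  if_neg hu

lemma mem_box_of_abs_le {a b s : ℝ} (ha : 0 < a) (hb : 0 < b) (hs : |s| ≤ a * b) :
    (2 - 2 * s / (a * b), a / (a + b)) ∈ Icc (0 : ℝ) 4 ×ˢ Icc (0 : ℝ) 1 := by
  have hab : 0 < a * b := mul_pos ha hb
  obtain ⟨hlo, hhi⟩ := abs_le.1 hs
  refine ⟨⟨?_, ?_⟩, div_nonneg ha.le (by positivity),
    (div_le_one (by positivity)).2 (by linarith)⟩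
  · rw [sub_nonneg, div_le_iff₀ hab]; linarith
  · have : -2 ≤ 2 * s / (a * b) := by rw [le_div_iff₀ hab]; linarith
    linarith

lemma cFun_mul_eq {n a b s : ℝ} (ha : 0 < a) (hb : 0 < b) (hS : 0 ≤ a ^ 2 + 2 * s + b ^ 2) :
    cFun n (2 - 2 * s / (a * b), a / (a + b)) *
        (2 * a ^ 4 * b ^ 2 * (a ^ (2 * n - 2) + b ^ (2 * n - 2)))
      = 4 * (a ^ 2 * b ^ 2 - s ^ 2) * (√(a ^ 2 + 2 * s + b ^ 2) ^ n - b ^ n) ^ 2 := by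
  have hab : 0 < a + b := add_pos ha hb
  set z := 2 - 2 * s / (a * b)
  have h1u : 1 - a / (a + b) = b / (a + b) := by field_simp; ring
  have hquad : 1 - z * (a / (a + b)) + z * (a / (a + b)) ^ 2
      = (a ^ 2 + 2 * s + b ^ 2) / (a + b) ^ 2 := by
    simp only [z]; field_simp; ring
  have hsqrt : ((a ^ 2 + 2 * s + b ^ 2) / (a + b) ^ 2) ^ (n / 2)
      = √(a ^ 2 + 2 * s + b ^ 2) ^ n / (a + b) ^ n := by
    rw [Real.div_rpow hS (by positivity), Real.sqrt_eq_rpow, ← Real.rpow_mul hS,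
      ← Real.rpow_natCast (a + b) 2, ← Real.rpow_mul hab.le]
    ring_nf
  have hpow : (a + b) ^ (2 * n - 2) = ((a + b) ^ n) ^ 2 / (a + b) ^ 2 := by
    rw [eq_div_iff (by positivity), ← Real.rpow_natCast (a + b) 2,
      ← Real.rpow_natCast ((a + b) ^ n) 2, ← Real.rpow_add hab, ← Real.rpow_mul hab.le]
    push_cast; ring_nf
  have : (a + b) ^ n ≠ 0 := (Real.rpow_pos_of_pos hab n).ne'
  have : 0 < a ^ (2 * n - 2) + b ^ (2 * n - 2) := by positivity
  rw [cFun_of_ne_zero n (by positivity), hquad, h1u, hsqrt, Real.div_rpow hb.le hab.le,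
    Real.div_rpow ha.le hab.le, Real.div_rpow hb.le hab.le, hpow]
  simp only [z]
  field_simp
  ring

section

variable {n C : ℝ} (hC : ∀ x ∈ Icc (0 : ℝ) 4 ×ˢ Icc (0 : ℝ) 1, cFun n x ≤ C)
include hC

lemma sq_sub_mul_sq_rpow_sub_le_of_pos {a b s : ℝ} (ha : 0 < a) (hb : 0 < b)
    (hs : |s| ≤ a * b) :
    (a ^ 2 * b ^ 2 - s ^ 2) * (√(a ^ 2 + 2 * s + b ^ 2) ^ n - b ^ n) ^ 2
      ≤ C / 2 * a ^ 4 * b ^ 2 * (a ^ (2 * n - 2) + b ^ (2 * n - 2)) := by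
  have hS : 0 ≤ a ^ 2 + 2 * s + b ^ 2 := by nlinarith [neg_abs_le s, sq_nonneg (a - b)]
  have hD : 0 ≤ 2 * a ^ 4 * b ^ 2 * (a ^ (2 * n - 2) + b ^ (2 * n - 2)) := by positivity
  have key := mul_le_mul_of_nonneg_right (hC _ (mem_box_of_abs_le ha hb hs)) hD
  rw [cFun_mul_eq ha hb hS] at key
  linarith

lemma sq_sub_mul_sq_rpow_sub_le {A B s : ℝ} (hA : 0 ≤ A) (hB : 0 ≤ B) (hs : s ^ 2 ≤ A * B) :
    (A * B - s ^ 2) * (√(A + 2 * s + B) ^ n - √B ^ n) ^ 2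
      ≤ C / 2 * A ^ 2 * B * (√A ^ (2 * n - 2) + √B ^ (2 * n - 2)) := by
  rcases hA.eq_or_lt with rfl | hA
  · obtain rfl : s = 0 := by simpa using hs
    simp
  rcases hB.eq_or_lt with rfl | hB
  · obtain rfl : s = 0 := by simpa using hs
    simp
  have h := sq_sub_mul_sq_rpow_sub_le_of_pos hC (Real.sqrt_pos.2 hA) (Real.sqrt_pos.2 hB)
    (Real.sqrt_mul hA.le B ▸ Real.abs_le_sqrt hs)
  have h4 : √A ^ 4 = A ^ 2 := by rw [show 4 = 2 * 2 by rfl, pow_mul, Real.sq_sqrt hA.le]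
  rwa [Real.sq_sqrt hA.le, Real.sq_sqrt hB.le, h4] at h

end

theorem stmt8_general (n : ℝ) (d : ℕ) (C : ℝ)
    (hC : IsGreatest (cFun n '' (Set.Icc (0 : ℝ) 4 ×ˢ Set.Icc (0 : ℝ) 1)) C)
    (p q : Fin d → ℝ) :
    ((∑ i, p i ^ 2) * (∑ i, q i ^ 2) - (∑ i, p i * q i) ^ 2) *
        (Real.sqrt (∑ i, (p i + q i) ^ 2) ^ n - Real.sqrt (∑ i, q i ^ 2) ^ n) ^ 2
      ≤ C / 2 * (∑ i, p i ^ 2) ^ 2 * (∑ i, q i ^ 2) *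
        (Real.sqrt (∑ i, p i ^ 2) ^ (2 * n - 2) + Real.sqrt (∑ i, q i ^ 2) ^ (2 * n - 2)) := by
  have hsum : ∑ i, (p i + q i) ^ 2 = ∑ i, p i ^ 2 + 2 * ∑ i, p i * q i + ∑ i, q i ^ 2 := by
    simp only [add_sq, Finset.sum_add_distrib, Finset.mul_sum, mul_assoc]
  rw [hsum]
  exact sq_sub_mul_sq_rpow_sub_le (fun x hx => hC.2 (mem_image_of_mem _ hx))
    (Finset.sum_nonneg fun i _ => sq_nonneg _) (Finset.sum_nonneg fun i _ => sq_nonneg _)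
    (Finset.sum_mul_sq_le_sq_mul_sq _ p q)

/-- with `C_n := max_{[0,4]×[0,1]} c_n`, for all `p, q ∈ ℝ^d`:
`|p ∧ q|² (|p+q|^n − |q|^n)² ≤ (C_n/2) |p|⁴ |q|² [|p|^{2n−2} + |q|^{2n−2}]`,
where `|p ∧ q|² = |p|²|q|² − (p·q)²`. -/
theorem stmt8 (n : ℝ) (hn : 1 < n) (d : ℕ) (hd : 2 ≤ d) (C : ℝ)
    (hC : IsGreatest (cFun n '' (Set.Icc (0 : ℝ) 4 ×ˢ Set.Icc (0 : ℝ) 1)) C)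
    (p q : Fin d → ℝ) :
    ((∑ i, p i ^ 2) * (∑ i, q i ^ 2) - (∑ i, p i * q i) ^ 2) *
        (Real.sqrt (∑ i, (p i + q i) ^ 2) ^ n - Real.sqrt (∑ i, q i ^ 2) ^ n) ^ 2
      ≤ C / 2 * (∑ i, p i ^ 2) ^ 2 * (∑ i, q i ^ 2) *
        (Real.sqrt (∑ i, p i ^ 2) ^ (2 * n - 2) + Real.sqrt (∑ i, q i ^ 2) ^ (2 * n - 2)) :=
  stmt8_general n d C hC p q
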